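/- arXiv:0805.0006 — 4 statements merged into one kernel-verified Lean document; each statement's English description precedes it below -/
import Mathlib

section
/- Let G be a finite group whose order is a power of 2, and let ρ : G → GL(ℂ³) be a group homomorphism (a linear action of G on ℂ³). Then the induced action of G on the projective plane ℙ² = ℙ(ℂ³) has a fixed point: there exists a point p of the projectivization of ℂ³ such that for every g ∈ G, the projective transformation induced by ρ(g) maps p to itself. -/
/-!
Let `N` be the normal subgroup of elements acting by scalars. If `N = G`, every line is invariant.
Otherwise, `G` being nilpotent, some `h ∉ N` has all its commutators `⁅h, k⁆` in `N`, that is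
`ρ h ρ k = c • ρ k ρ h` for a scalar `c`. Taking determinants gives `c ^ 3 = 1`, while
`c ^ |G| = 1`; as `|G|` is prime to `3`, `c = 1`. So `ρ h` is a non-scalar operator commuting
with `G`, and for an eigenvalue `μ` of it, the kernel and the image of `ρ h - μ` are nonzero
invariant subspaces whose dimensions add up to `3`: one of them is an invariant line.
-/

open Module LinearMap
open scoped commutatorElement LinearAlgebra.Projectivization

namespace Module.End

variable {R M : Type*} [CommSemiring R] [AddCommMonoid M] [Module R M] {f T : End R M}

theorem ker_mem_invtSubmodule_of_commute (h : Commute f T) : ker f ∈ T.invtSubmodule := by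
  rw [mem_invtSubmodule_iff_forall_mem_of_mem]
  intro x hx
  rw [mem_ker] at hx ⊢
  rw [← mul_apply, h.eq, mul_apply, hx, map_zero]

theorem range_mem_invtSubmodule_of_commute (h : Commute f T) : range f ∈ T.invtSubmodule := by
  rw [mem_invtSubmodule_iff_forall_mem_of_mem]
  rintro _ ⟨x, rfl⟩
  exact ⟨T x, by rw [← mul_apply, h.eq, mul_apply]⟩

end Module.End

section FiniteDimensional

variable {K V : Type*} [Field K] [AddCommGroup V] [Module K V] [FiniteDimensional K V]

theorem LinearEquiv.pow_finrank_eq_one_of_apply_apply_eq_smul {f g : V ≃ₗ[K] V} {c : K}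
    (h : ∀ v, f (g v) = c • g (f v)) : c ^ finrank K V = 1 := by
  have hcomp : (f : End K V) ∘ₗ (g : End K V) = c • ((g : End K V) ∘ₗ (f : End K V)) :=
    LinearMap.ext h
  have hdet := congrArg LinearMap.det hcomp
  rw [LinearMap.det_comp, LinearMap.det_smul, LinearMap.det_comp,
    mul_comm (LinearMap.det (g : End K V))] at hdet
  exact (mul_eq_right₀ (f.isUnit_det'.mul g.isUnit_det').ne_zero).mp hdet.symm

theorem finrank_ker_eq_one_or_finrank_range_eq_one (hV : finrank K V = 3) {φ : End K V}
    (hker : ker φ ≠ ⊥) (hφ : φ ≠ 0) : finrank K (ker φ) = 1 ∨ finrank K (range φ) = 1 := by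
  have hrank := φ.finrank_range_add_finrank_ker
  have hker_pos : 0 < finrank K (ker φ) :=
    Nat.pos_of_ne_zero (Submodule.finrank_eq_zero.not.mpr hker)
  have hrange_pos : 0 < finrank K (range φ) :=
    Nat.pos_of_ne_zero (Submodule.finrank_eq_zero.not.mpr (range_eq_bot.not.mpr hφ))
  omega

end FiniteDimensional

theorem Subgroup.exists_notMem_forall_commutatorElement_mem {G : Type*} [Group G]
    [Group.IsNilpotent G] (N : Subgroup G) [N.Normal] (hN : N ≠ ⊤) :
    ∃ h ∉ N, ∀ k, ⁅h, k⁆ ∈ N := by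
  have : Nontrivial (G ⧸ N) := QuotientGroup.nontrivial_iff.mpr hN
  obtain ⟨⟨z, hz⟩, hz1⟩ := Subgroup.ne_bot_iff_exists_ne_one.mp
    (Group.IsNilpotent.center_ne_bot (G := G ⧸ N))
  obtain ⟨h, rfl⟩ := QuotientGroup.mk_surjective z
  refine ⟨h, fun hh => hz1 (Subtype.ext ((QuotientGroup.eq_one_iff h).mpr hh)), fun k => ?_⟩
  rw [← QuotientGroup.eq_one_iff, ← QuotientGroup.mk'_apply, map_commutatorElement,
    commutatorElement_eq_one_iff_mul_comm]
  exact Subgroup.mem_center_iff.mp hz _ |>.symm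

namespace MonoidHom

variable {G K V : Type*} [Group G] [Field K] [AddCommGroup V] [Module K V]
  (ρ : G →* V ≃ₗ[K] V)

def scalarSubgroup : Subgroup G where
  carrier := {g | ∃ c : K, ∀ v, ρ g v = c • v}
  one_mem' := ⟨1, by simp⟩
  mul_mem' := by
    rintro a b ⟨c, hc⟩ ⟨d, hd⟩
    exact ⟨d * c, fun v => by rw [map_mul, LinearEquiv.mul_apply, hd, map_smul, hc, smul_smul]⟩
  inv_mem' := by
    rintro g ⟨c, hc⟩
    refine ⟨c⁻¹, fun v => ?_⟩
    rw [map_inv, LinearEquiv.coe_inv, LinearEquiv.symm_apply_eq, hc, smul_smul]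
    obtain rfl | hc0 := eq_or_ne c 0
    · simpa [hc] using ((ρ g).apply_symm_apply v).symm
    · rw [mul_inv_cancel₀ hc0, one_smul]

theorem mem_scalarSubgroup {g : G} : g ∈ ρ.scalarSubgroup ↔ ∃ c : K, ∀ v, ρ g v = c • v :=
  Iff.rfl

instance : ρ.scalarSubgroup.Normal where
  conj_mem g := by
    rintro ⟨c, hc⟩ k
    refine ⟨c, fun v => ?_⟩
    rw [map_mul, map_mul, LinearEquiv.mul_apply, LinearEquiv.mul_apply, hc, map_smul,
      ← LinearEquiv.mul_apply, ← map_mul, mul_inv_cancel, map_one, LinearEquiv.coe_one, id_eq]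

theorem pow_natCard_eq_one_of_apply_eq_smul [Nontrivial V] [Finite G] {g : G} {c : K}
    (hc : ∀ v, ρ g v = c • v) : c ^ Nat.card G = 1 := by
  obtain ⟨v, hv⟩ := exists_ne (0 : V)
  have hpow : ∀ n : ℕ, ρ (g ^ n) v = c ^ n • v := by
    intro n
    induction n with
    | zero => simp
    | succ n ih =>
      rw [pow_succ, map_mul, LinearEquiv.mul_apply, hc, map_smul, ih, smul_smul, pow_succ']
  refine smul_left_injective K hv ?_
  simpa using (hpow (Nat.card G)).symm

theorem commute_of_commutatorElement_mem_scalarSubgroup [FiniteDimensional K V] [Finite G]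
    (hG : (Nat.card G).Coprime (finrank K V)) {h k : G} (hhk : ⁅h, k⁆ ∈ ρ.scalarSubgroup) :
    Commute (ρ h : End K V) (ρ k) := by
  cases subsingleton_or_nontrivial V
  · exact LinearMap.ext fun _ => Subsingleton.elim _ _
  obtain ⟨c, hc⟩ := hhk
  have hmul : h * k = ⁅h, k⁆ * (k * h) := by rw [commutatorElement_def]; group
  have hskew : ∀ v, ρ h (ρ k v) = c • ρ k (ρ h v) := fun v => by
    rw [← hc, ← LinearEquiv.mul_apply, ← map_mul, hmul, map_mul, map_mul]; rfl
  have hc1 : c = 1 := (pow_eq_one_iff_of_coprime hG).mp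
    ⟨ρ.pow_natCard_eq_one_of_apply_eq_smul hc,
      LinearEquiv.pow_finrank_eq_one_of_apply_apply_eq_smul hskew⟩
  exact LinearMap.ext fun v => by simpa [hc1] using hskew v

theorem exists_invariant_line_of_finrank_eq_three [IsAlgClosed K] [FiniteDimensional K V]
    (hV : finrank K V = 3) [Finite G] [Group.IsNilpotent G] (hG : (Nat.card G).Coprime 3) :
    ∃ W : Submodule K V, finrank K W = 1 ∧ ∀ g, W ∈ End.invtSubmodule (ρ g : End K V) := by
  have : Nontrivial V := nontrivial_of_finrank_eq_succ hV
  by_cases hN : ρ.scalarSubgroup = ⊤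
  · obtain ⟨v, hv⟩ := exists_ne (0 : V)
    refine ⟨K ∙ v, finrank_span_singleton hv, fun g => ?_⟩
    obtain ⟨c, hc⟩ := ρ.mem_scalarSubgroup.mp (hN ▸ Subgroup.mem_top g)
    exact (End.mem_invtSubmodule_iff_forall_mem_of_mem _).mpr fun x hx =>
      (hc x).symm ▸ Submodule.smul_mem _ c hx
  obtain ⟨h, hhN, hcomm⟩ := ρ.scalarSubgroup.exists_notMem_forall_commutatorElement_mem hN
  obtain ⟨μ, hμ⟩ := End.exists_eigenvalue (ρ h : End K V)
  set φ := (ρ h : End K V) - μ • 1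
  have hker : LinearMap.ker φ ≠ ⊥ := by
    rw [← End.eigenspace_def]; exact End.hasEigenvalue_iff.mp hμ
  have hφ : φ ≠ 0 := fun h0 =>
    hhN ⟨μ, fun v => by simpa [φ, sub_eq_zero] using congr($h0 v)⟩
  have hφ_comm : ∀ k, Commute φ (ρ k) := fun k =>
    (ρ.commute_of_commutatorElement_mem_scalarSubgroup (hV ▸ hG) (hcomm k)).sub_left
      ((Commute.one_left _).smul_left μ)
  rcases finrank_ker_eq_one_or_finrank_range_eq_one hV hker hφ with h1 | h1
  · exact ⟨_, h1, fun k => End.ker_mem_invtSubmodule_of_commute (hφ_comm k)⟩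
  · exact ⟨_, h1, fun k => End.range_mem_invtSubmodule_of_commute (hφ_comm k)⟩

end MonoidHom

namespace Projectivization

variable {K V : Type*} [Field K] [AddCommGroup V] [Module K V]

theorem map_mk''_eq_self {f : V →ₗ[K] V} (hf : Function.Injective f) {W : Submodule K V}
    (hW : finrank K W = 1) (hfW : W ∈ Module.End.invtSubmodule f) :
    (mk'' W hW).map f hf = mk'' W hW := by
  set p := mk'' W hW
  have hpW : K ∙ p.rep = W := by rw [← submodule_eq, submodule_mk'']
  obtain ⟨a, ha⟩ := Submodule.mem_span_singleton.mp
    (hpW ▸ hfW (hpW ▸ Submodule.mem_span_singleton_self p.rep))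
  rw [← mk_rep p, map_mk, mk_eq_mk_iff']
  exact ⟨a, ha⟩

end Projectivization

/-- A finite group of 2-power order acting linearly on `ℂ³` has a fixed point on the
projective plane `ℙ(ℂ³)`. -/
theorem fixed_point_on_P2 (G : Type) [Group G] [Fintype G] (r : ℕ)
    (hG : Fintype.card G = 2 ^ r)
    (ρ : G →* ((Fin 3 → ℂ) ≃ₗ[ℂ] (Fin 3 → ℂ))) :
    ∃ p : ℙ ℂ (Fin 3 → ℂ), ∀ g : G,
      Projectivization.map ((ρ g : (Fin 3 → ℂ) ≃ₗ[ℂ] (Fin 3 → ℂ)) :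
          (Fin 3 → ℂ) →ₗ[ℂ] (Fin 3 → ℂ)) (ρ g).injective p = p := by
  have hcard : Nat.card G = 2 ^ r := by rw [Nat.card_eq_fintype_card, hG]
  have : Fact (Nat.Prime 2) := ⟨Nat.prime_two⟩
  have : Group.IsNilpotent G := (IsPGroup.of_card hcard).isNilpotent
  obtain ⟨W, hW, hWρ⟩ := ρ.exists_invariant_line_of_finrank_eq_three (finrank_fin_fun ℂ)
    (hcard ▸ Nat.Coprime.pow_left r (by norm_num))
  exact ⟨.mk'' W hW, fun g => Projectivization.map_mk''_eq_self _ hW (hWρ g)⟩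
end

section
/- Let G be a finite group whose order is a power of 2, and let ρ : G → GL(ℂ³) be a group homomorphism. Then G has a common eigenvector: there exists a nonzero vector v ∈ ℂ³ such that for every g ∈ G there is a scalar c ∈ ℂ with ρ(g)(v) = c • v. -/
/-!
Induct on `r`. A subgroup `H` of index 2 has, by induction, an invariant line `ℓ`; for `g ∉ H`
every translate of `ℓ` is `ℓ` or `g ℓ`, so the translates span a `G`-invariant subspace of
dimension 1 or 2. Since `2` is invertible, Maschke's theorem gives it a `G`-invariant
complement, and in `ℂ³` one of the two is a line.
-/

open Module

namespace Subrepresentation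

variable {k G V : Type*} [Field k] [AddCommGroup V] [Module k V]

section Monoid

variable [Monoid G] (ρ : Representation k G V)

def generatedBy (p : Submodule k V) : Subrepresentation ρ where
  toSubmodule := ⨆ x, p.map (ρ x)
  apply_mem_toSubmodule g v hv := by
    have hmap : (⨆ x, p.map (ρ x)).map (ρ g) ≤ ⨆ x, p.map (ρ x) := by
      rw [Submodule.map_iSup]
      refine iSup_le fun x => le_iSup_of_le (g * x) ?_
      rw [map_mul, Module.End.mul_eq_comp, Submodule.map_comp]
    exact hmap (Submodule.mem_map_of_mem hv)

lemma le_generatedBy (p : Submodule k V) : p ≤ (generatedBy ρ p).toSubmodule :=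
  le_iSup_of_le 1 (by rw [map_one, Module.End.one_eq_id, Submodule.map_id])

lemma exists_finrank_eq_one_of_subsingleton [Subsingleton G] (hV : 0 < finrank k V) :
    ∃ L : Subrepresentation ρ, finrank k L.toSubmodule = 1 := by
  have : Nontrivial V := Module.nontrivial_of_finrank_pos hV
  obtain ⟨v, hv⟩ := exists_ne (0 : V)
  refine ⟨⟨k ∙ v, fun g w hw => ?_⟩, finrank_span_singleton hv⟩
  rwa [Subsingleton.elim g 1, map_one, Module.End.one_apply]

lemma exists_eigenvector_of_finrank_eq_one (L : Subrepresentation ρ)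
    (hL : finrank k L.toSubmodule = 1) : ∃ v : V, v ≠ 0 ∧ ∀ g, ∃ c : k, ρ g v = c • v := by
  obtain ⟨v, hv0, hspan⟩ := finrank_eq_one_iff'.mp hL
  refine ⟨v, fun h => hv0 (Subtype.ext h), fun g => ?_⟩
  obtain ⟨c, hc⟩ := hspan ⟨ρ g v, L.apply_mem_toSubmodule g v.2⟩
  exact ⟨c, (congrArg Subtype.val hc).symm⟩

variable {ρ}

lemma isCompl_toSubmodule {W W' : Subrepresentation ρ} (h : IsCompl W W') :
    IsCompl W.toSubmodule W'.toSubmodule :=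
  ⟨disjoint_iff.mpr (congrArg toSubmodule h.inf_eq_bot),
    codisjoint_iff.mpr (congrArg toSubmodule h.sup_eq_top)⟩

end Monoid

section Group

variable [Group G] {ρ : Representation k G V}

lemma generatedBy_le_sup_map_of_index_eq_two {H : Subgroup G} (hH : H.index = 2) {g : G}
    (hg : g ∉ H) (L : Subrepresentation (ρ.comp H.subtype)) :
    (generatedBy ρ L.toSubmodule).toSubmodule ≤ L.toSubmodule ⊔ L.toSubmodule.map (ρ g) := by
  have hL : ∀ h ∈ H, L.toSubmodule.map (ρ h) ≤ L.toSubmodule := fun h hh =>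
    Submodule.map_le_iff_le_comap.mpr fun v hv => L.apply_mem_toSubmodule ⟨h, hh⟩ hv
  refine iSup_le fun x => ?_
  by_cases hx : x ∈ H
  · exact le_sup_of_le_left (hL x hx)
  · have hgx : g⁻¹ * x ∈ H := by
      rw [Subgroup.mul_mem_iff_of_index_two hH, Subgroup.inv_mem_iff]
      exact iff_of_false hg hx
    calc L.toSubmodule.map (ρ x) = (L.toSubmodule.map (ρ (g⁻¹ * x))).map (ρ g) := by
          rw [← Submodule.map_comp, ← Module.End.mul_eq_comp, ← map_mul, mul_inv_cancel_left]
      _ ≤ L.toSubmodule.map (ρ g) := Submodule.map_mono (hL _ hgx)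
      _ ≤ _ := le_sup_right

lemma finrank_generatedBy_le_of_index_eq_two [FiniteDimensional k V] {H : Subgroup G}
    (hH : H.index = 2) (L : Subrepresentation (ρ.comp H.subtype)) :
    finrank k (generatedBy ρ L.toSubmodule).toSubmodule ≤ 2 * finrank k L.toSubmodule := by
  obtain ⟨g, hg⟩ : ∃ g, g ∉ H := by
    by_contra! h
    rw [(Subgroup.eq_top_iff' H).mpr h, Subgroup.index_top] at hH
    omega
  calc finrank k (generatedBy ρ L.toSubmodule).toSubmodule
      ≤ finrank k ↥(L.toSubmodule ⊔ L.toSubmodule.map (ρ g)) :=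
        Submodule.finrank_mono (generatedBy_le_sup_map_of_index_eq_two hH hg L)
    _ ≤ finrank k L.toSubmodule + finrank k ↥(L.toSubmodule.map (ρ g)) :=
        Submodule.finrank_add_le_finrank_add_finrank _ _
    _ ≤ 2 * finrank k L.toSubmodule := by
        linarith [Submodule.finrank_map_le (ρ g) L.toSubmodule]

lemma exists_finrank_eq_one_of_finrank_eq_three [Finite G] [NeZero (Nat.card G : k)]
    (hV : finrank k V = 3) (W : Subrepresentation ρ) (hW₀ : 0 < finrank k W.toSubmodule)
    (hW₃ : finrank k W.toSubmodule < 3) :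
    ∃ L : Subrepresentation ρ, finrank k L.toSubmodule = 1 := by
  have : FiniteDimensional k V := Module.finite_of_finrank_eq_succ hV
  obtain ⟨W', hW'⟩ := exists_isCompl W
  have hsum := Submodule.finrank_add_eq_of_isCompl (isCompl_toSubmodule hW')
  by_cases hW₁ : finrank k W.toSubmodule = 1
  · exact ⟨W, hW₁⟩
  · exact ⟨W', by omega⟩

end Group

theorem exists_finrank_eq_one_of_card_eq_two_pow [NeZero (2 : k)] (hV : finrank k V = 3)
    (r : ℕ) : ∀ (G : Type*) [Group G] [Finite G] (ρ : Representation k G V),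
      Nat.card G = 2 ^ r → ∃ L : Subrepresentation ρ, finrank k L.toSubmodule = 1 := by
  have : FiniteDimensional k V := Module.finite_of_finrank_eq_succ hV
  induction r with
  | zero =>
    intro G _ _ ρ hG
    have : Subsingleton G := (Nat.card_eq_one_iff_unique.mp hG).1
    exact exists_finrank_eq_one_of_subsingleton ρ (by omega)
  | succ r ih =>
    intro G _ _ ρ hG
    obtain ⟨H, hH⟩ := Sylow.exists_subgroup_card_pow_prime 2 (hG ▸ pow_dvd_pow 2 r.le_succ)
    have hindex : H.index = 2 := by
      have := H.card_mul_index
      rw [hH, hG, pow_succ] at this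
      exact Nat.eq_of_mul_eq_mul_left (by positivity) this
    obtain ⟨L, hL⟩ := ih H (ρ.comp H.subtype) hH
    have : NeZero (Nat.card G : k) := ⟨by rw [hG, Nat.cast_pow]; exact pow_ne_zero _ two_ne_zero⟩
    have hU := finrank_generatedBy_le_of_index_eq_two hindex L
    have hLU := Submodule.finrank_mono (le_generatedBy ρ L.toSubmodule)
    exact exists_finrank_eq_one_of_finrank_eq_three hV (generatedBy ρ L.toSubmodule) (by omega)
      (by omega)

end Subrepresentation

open Subrepresentation in
/-- A finite group of 2-power order acting linearly on `ℂ³` has a common eigenvector. -/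
theorem common_eigenvector (G : Type) [Group G] [Fintype G] (r : ℕ)
    (hG : Fintype.card G = 2 ^ r)
    (ρ : G →* ((Fin 3 → ℂ) ≃ₗ[ℂ] (Fin 3 → ℂ))) :
    ∃ v : Fin 3 → ℂ, v ≠ 0 ∧ ∀ g : G, ∃ c : ℂ, ρ g v = c • v := by
  let σ : Representation ℂ G (Fin 3 → ℂ) :=
    LinearEquiv.automorphismGroup.toLinearMapMonoidHom.comp ρ
  obtain ⟨L, hL⟩ := exists_finrank_eq_one_of_card_eq_two_pow (by simp) r G σ
    (by rw [Nat.card_eq_fintype_card, hG])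
  exact exists_eigenvector_of_finrank_eq_one σ L hL
end

section
/- Let G be the dihedral group of order 8, let W be the 7-dimensional complex representation of G given by the sum-zero functions inside the left regular representation, and let Sym²W be its symmetric square with the induced G-action. Then the subspace of G-invariant elements of Sym²W, namely {x ∈ Sym²W : g • x = x for all g ∈ G}, has complex dimension 6. -/
open scoped TensorProduct

set_option synthInstance.maxHeartbeats 1000000
set_option maxHeartbeats 1000000

/-- The left regular action of `g` on functions `DihedralGroup 4 → ℂ`:
`(reg g f) x = f (g⁻¹ * x)`. -/
noncomputable def reg (g : DihedralGroup 4) :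
    (DihedralGroup 4 → ℂ) →ₗ[ℂ] (DihedralGroup 4 → ℂ) :=
  LinearMap.funLeft ℂ ℂ (fun x => g⁻¹ * x)

/-- The subspace of sum-zero functions: the regular representation minus the
trivial representation; it is 7-dimensional. -/
noncomputable def W : Submodule ℂ (DihedralGroup 4 → ℂ) :=
  LinearMap.ker (∑ x : DihedralGroup 4, LinearMap.proj x :
    (DihedralGroup 4 → ℂ) →ₗ[ℂ] ℂ)

lemma reg_mem_W (g : DihedralGroup 4) {f : DihedralGroup 4 → ℂ} (hf : f ∈ W) :
    reg g f ∈ W := by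
  simp only [W, LinearMap.mem_ker, LinearMap.sum_apply, LinearMap.proj_apply] at hf ⊢
  calc ∑ x : DihedralGroup 4, reg g f x
      = ∑ x : DihedralGroup 4, f x :=
        Fintype.sum_equiv (Equiv.mulLeft g⁻¹) _ _ (fun x => rfl)
    _ = 0 := hf

/-- The action of `g` on `W`. -/
noncomputable def regW (g : DihedralGroup 4) : W →ₗ[ℂ] W :=
  (reg g).restrict (fun _ hf => reg_mem_W g hf)

noncomputable instance : AddCommGroup (↥W ⊗[ℂ] ↥W) := TensorProduct.addCommGroup

/-- The diagonal action of `g` on `W ⊗ W`. -/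
noncomputable def tenAct (g : DihedralGroup 4) : (↥W ⊗[ℂ] ↥W) →ₗ[ℂ] (↥W ⊗[ℂ] ↥W) :=
  TensorProduct.map (regW g) (regW g)

/-- The subspace of `W ⊗ W` spanned by the elements `x ⊗ y - y ⊗ x`. -/
noncomputable def symRel : Submodule ℂ (↥W ⊗[ℂ] ↥W) :=
  Submodule.span ℂ {z | ∃ x y : W, z = x ⊗ₜ[ℂ] y - y ⊗ₜ[ℂ] x}

/-- The symmetric square `Sym² W`: the quotient of `W ⊗ W` by the span of the
elements `x ⊗ y - y ⊗ x`. -/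
noncomputable abbrev Sym2W : Type := (↥W ⊗[ℂ] ↥W) ⧸ symRel

lemma symRel_le (g : DihedralGroup 4) : symRel ≤ symRel.comap (tenAct g) := by
  rw [symRel, Submodule.span_le]
  rintro z ⟨x, y, rfl⟩
  simp only [Submodule.mem_comap, map_sub, tenAct, TensorProduct.map_tmul]
  exact Submodule.subset_span ⟨regW g x, regW g y, rfl⟩

/-- The induced action of `g` on `Sym² W`. -/
noncomputable def symAct (g : DihedralGroup 4) : Sym2W →ₗ[ℂ] Sym2W :=
  Submodule.mapQ symRel symRel (tenAct g) (symRel_le g)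

/-- The subspace of `G`-invariant elements of `Sym² W`. -/
noncomputable def invariants : Submodule ℂ Sym2W where
  carrier := {x | ∀ g : DihedralGroup 4, symAct g x = x}
  add_mem' := by
    intro a b ha hb g
    rw [map_add, ha g, hb g]
  zero_mem' := by
    intro g
    rw [map_zero]
  smul_mem' := by
    intro c a ha g
    rw [map_smul, ha g]

/-!
The multiplicity of the trivial representation in a representation with character `χ` is the
average of `χ` over `G`, and the character of the symmetric square is `(χ(g)² + χ(g²)) / 2`.
For the regular representation minus the trivial one, `χ(g) = |G|·[g = 1] - 1`, so this average is
`(|G| + #{g | g² = 1} - 2) / 2`; in the dihedral group of order 8 six elements square to `1`.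
-/

open LinearMap (trace)
open Finset
open TannakaDuality.FiniteGroup (leftRegular leftRegular_apply)

universe u

namespace LinearMap

variable {R : Type*} [CommSemiring R]

theorem trace_funLeft {ι : Type*} [Fintype ι] [DecidableEq ι] (σ : ι → ι) :
    trace R (ι → R) (funLeft R R σ) = #{i | σ i = i} := by
  rw [trace_eq_matrix_trace R (Pi.basisFun R ι), Matrix.trace]
  simp [funLeft_apply, Pi.single_apply]

theorem trace_map_comp_comm {M : Type*} [AddCommMonoid M] [Module R M] [Module.Free R M]
    [Module.Finite R M] (f g : M →ₗ[R] M) :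
    trace R (M ⊗[R] M) (TensorProduct.map f g ∘ₗ TensorProduct.comm R M M) =
      trace R M (f ∘ₗ g) := by
  classical
  let b := Module.Free.chooseBasis R M
  rw [trace_eq_matrix_trace R (b.tensorProduct b), trace_eq_matrix_trace R b, Matrix.trace,
    Matrix.trace, Fintype.sum_prod_type, toMatrix_comp b b b]
  refine sum_congr rfl fun i _ => ?_
  simp [Matrix.mul_apply, toMatrix_apply, Module.Basis.tensorProduct_apply',
    Module.Basis.tensorProduct_repr_tmul_apply, mul_comm]

end LinearMap

namespace TensorProduct

section CommRing

variable (R V : Type*) [CommRing R] [AddCommGroup V] [Module R V]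

def antisymmSpan : Submodule R (V ⊗[R] V) :=
  Submodule.span R {z | ∃ x y : V, z = x ⊗ₜ[R] y - y ⊗ₜ[R] x}

def symmetrizer [Invertible (2 : R)] : V ⊗[R] V →ₗ[R] V ⊗[R] V :=
  (⅟2 : R) • (LinearMap.id + (TensorProduct.comm R V V).toLinearMap)

variable {R V}

theorem antisymmSpan_le_comap_map (f : V →ₗ[R] V) :
    antisymmSpan R V ≤ (antisymmSpan R V).comap (map f f) := by
  rw [antisymmSpan, Submodule.span_le]
  rintro _ ⟨x, y, rfl⟩
  simp only [SetLike.mem_coe, Submodule.mem_comap, map_sub, map_tmul]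
  exact Submodule.subset_span ⟨f x, f y, rfl⟩

theorem sub_comm_mem_antisymmSpan (t : V ⊗[R] V) :
    t - TensorProduct.comm R V V t ∈ antisymmSpan R V := by
  induction t using TensorProduct.induction_on with
  | zero => simp
  | tmul x y => exact Submodule.subset_span ⟨x, y, rfl⟩
  | add a b ha hb => simpa [add_sub_add_comm] using add_mem ha hb

variable [Invertible (2 : R)]

theorem antisymmSpan_le_ker_symmetrizer :
    antisymmSpan R V ≤ LinearMap.ker (symmetrizer R V) := by
  rw [antisymmSpan, Submodule.span_le]
  rintro _ ⟨x, y, rfl⟩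
  simp only [SetLike.mem_coe, LinearMap.mem_ker, symmetrizer, LinearMap.smul_apply,
    LinearMap.add_apply, LinearMap.id_apply, LinearEquiv.coe_coe, map_sub, comm_tmul]
  module

theorem sub_symmetrizer_mem_antisymmSpan (t : V ⊗[R] V) :
    t - symmetrizer R V t ∈ antisymmSpan R V := by
  have h : t - symmetrizer R V t = (⅟2 : R) • (t - TensorProduct.comm R V V t) := by
    simp only [symmetrizer, LinearMap.smul_apply, LinearMap.add_apply, LinearMap.id_apply,
      LinearEquiv.coe_coe]
    match_scalars
    · linear_combination -invOf_two_add_invOf_two (R := R)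
    · ring
  exact h ▸ Submodule.smul_mem _ _ (sub_comm_mem_antisymmSpan t)

end CommRing

theorem trace_mapQ_map_antisymmSpan {k V : Type*} [Field k] [Invertible (2 : k)]
    [AddCommGroup V] [Module k V] [FiniteDimensional k V] (f : V →ₗ[k] V) :
    trace k (V ⊗[k] V ⧸ antisymmSpan k V)
        ((antisymmSpan k V).mapQ _ (map f f) (antisymmSpan_le_comap_map f)) =
      ⅟2 * (trace k V f ^ 2 + trace k V (f ∘ₗ f)) := by
  set N := antisymmSpan k V
  -- The symmetrizer descends to a section `σ` of the quotient map, so `mapQ (map f f)` is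
  -- `mkQ ∘ map f f ∘ σ`, whose trace is that of `map f f ∘ σ ∘ mkQ = map f f ∘ symmetrizer`.
  set σ := N.liftQ (symmetrizer k V) antisymmSpan_le_ker_symmetrizer
  have mkQ_comp_σ : N.mkQ ∘ₗ σ = LinearMap.id := by
    refine Submodule.linearMap_qext _ (LinearMap.ext fun t => ?_)
    simpa [σ, Submodule.Quotient.eq] using N.neg_mem (sub_symmetrizer_mem_antisymmSpan t)
  have mapQ_eq :
      N.mapQ N (map f f) (antisymmSpan_le_comap_map f) = N.mkQ ∘ₗ (map f f ∘ₗ σ) := by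
    rw [← LinearMap.comp_assoc, ← Submodule.mapQ_mkQ, LinearMap.comp_assoc, mkQ_comp_σ,
      LinearMap.comp_id]
  rw [mapQ_eq, LinearMap.trace_comp_comm', LinearMap.comp_assoc, Submodule.liftQ_mkQ,
    symmetrizer, LinearMap.comp_smul, LinearMap.comp_add, map_smul, map_add, LinearMap.comp_id,
    LinearMap.trace_tensorProduct', LinearMap.trace_map_comp_comm, smul_eq_mul, sq]

end TensorProduct

namespace Representation

noncomputable def symmSquare {R G V : Type*} [CommRing R] [Monoid G] [AddCommGroup V]
    [Module R V] (ρ : Representation R G V) :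
    Representation R G (V ⊗[R] V ⧸ TensorProduct.antisymmSpan R V) :=
  (ρ.tprod ρ).quotient _ fun g => TensorProduct.antisymmSpan_le_comap_map (ρ g)

theorem char_symmSquare {k G V : Type*} [Field k] [Invertible (2 : k)] [Monoid G]
    [AddCommGroup V] [Module k V] [FiniteDimensional k V] (ρ : Representation k G V) (g : G) :
    ρ.symmSquare.character g = ⅟2 * (ρ.character g ^ 2 + ρ.character (g * g)) := by
  rw [character, character, character, map_mul, Module.End.mul_eq_comp]
  exact TensorProduct.trace_mapQ_map_antisymmSpan (ρ g)

end Representation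

def sumZero (R ι : Type*) [CommSemiring R] [Fintype ι] : Submodule R (ι → R) :=
  LinearMap.ker (∑ i : ι, LinearMap.proj i)

theorem trace_restrict_sumZero {k ι : Type*} [Field k] [Fintype ι]
    [Invertible (Nat.card ι : k)]
    (A : (ι → k) →ₗ[k] ι → k) (hA : sumZero k ι ≤ (sumZero k ι).comap A) (hA1 : A 1 = 1) :
    trace k (sumZero k ι) (A.restrict hA) = trace k (ι → k) A - 1 := by
  set s : (ι → k) →ₗ[k] k := ∑ i : ι, LinearMap.proj i
  set c : ι → k := ⅟(Nat.card ι : k) • 1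
  have s_c : s c = 1 := by
    simp only [s, c, LinearMap.sum_apply, LinearMap.proj_apply, Pi.smul_apply, Pi.one_apply,
      smul_eq_mul, mul_one, Finset.sum_const, Finset.card_univ, nsmul_eq_mul,
      ← Nat.card_eq_fintype_card, mul_invOf_self]
  -- `π` is the projection onto `sumZero` along the constant functions.
  set π := LinearMap.id - s.smulRight c
  have π_mem (f : ι → k) : π f ∈ sumZero k ι := by
    change s (π f) = 0
    simp only [π, LinearMap.sub_apply, LinearMap.id_apply, LinearMap.smulRight_apply, map_sub,
      map_smul, s_c, smul_eq_mul, mul_one, sub_self]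
  have π_of_mem (f : ι → k) (hf : f ∈ sumZero k ι) : π f = f := by
    simp_all [π, sumZero, s]
  have restrict_eq : A.restrict hA = π.codRestrict _ π_mem ∘ₗ A ∘ₗ (sumZero k ι).subtype := by
    ext f : 2
    simp [π_of_mem _ (hA f.2)]
  have A_comp_smulRight : A ∘ₗ s.smulRight c = s.smulRight c := by
    ext; simp [c, hA1]
  rw [restrict_eq, LinearMap.trace_comp_comm', LinearMap.comp_assoc,
    LinearMap.subtype_comp_codRestrict, LinearMap.comp_sub, A_comp_smulRight, map_sub,
    LinearMap.comp_id, LinearMap.trace_smulRight, s_c]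

section Regular

variable (R G : Type u) [CommRing R] [Group G] [Fintype G]

theorem sumZero_le_comap_leftRegular (g : G) :
    sumZero R G ≤ (sumZero R G).comap (leftRegular g) := by
  intro f hf
  simp only [sumZero, LinearMap.mem_ker, Submodule.mem_comap, LinearMap.sum_apply,
    LinearMap.proj_apply, leftRegular_apply] at hf ⊢
  exact (Equiv.sum_comp (Equiv.mulLeft g⁻¹) f).trans hf

noncomputable def sumZeroRep : Representation R G (sumZero R G) :=
  leftRegular.subrepresentation _ (sumZero_le_comap_leftRegular R G)

end Regular

section Character

variable {k G : Type u} [Field k] [Group G] [Fintype G] [DecidableEq G]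

theorem char_leftRegular (g : G) :
    (leftRegular : Representation k G (G → k)).character g =
      if g = 1 then (Nat.card G : k) else 0 := by
  rw [Representation.character, show leftRegular g = LinearMap.funLeft k k (g⁻¹ * ·) from rfl,
    LinearMap.trace_funLeft]
  split_ifs with h
  · simp [h, Nat.card_eq_fintype_card]
  · simp [h]

theorem char_sumZeroRep [Invertible (Nat.card G : k)] (g : G) :
    (sumZeroRep k G).character g = (if g = 1 then (Nat.card G : k) else 0) - 1 := by
  rw [← char_leftRegular]
  exact trace_restrict_sumZero _ (sumZero_le_comap_leftRegular k G g) (by ext; simp)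

theorem sum_char_sumZeroRep_sq_add_char_mul_self [Invertible (Nat.card G : k)] :
    ∑ g : G, ((sumZeroRep k G).character g ^ 2 + (sumZeroRep k G).character (g * g)) =
      Nat.card G * (Nat.card G + (#{g : G | g * g = 1} : ℕ) - 2) := by
  have sq_term (g : G) : ((if g = 1 then (Nat.card G : k) else 0) - 1) ^ 2 =
      (if g = 1 then (Nat.card G : k) ^ 2 - 2 * Nat.card G else 0) + 1 := by
    split_ifs <;> ring
  simp only [char_sumZeroRep, sq_term, Finset.sum_add_distrib, Finset.sum_sub_distrib,
    Finset.sum_ite_eq', Finset.mem_univ, if_true, ← Finset.sum_filter, Finset.sum_const,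
    Finset.card_univ, nsmul_eq_mul, mul_one, ← Nat.card_eq_fintype_card]
  ring

theorem two_mul_finrank_invariants_symmSquare_sumZeroRep_add_two [CharZero k] :
    2 * Module.finrank k (sumZeroRep k G).symmSquare.invariants + 2 =
      Nat.card G + #{g : G | g * g = 1} := by
  have hn : (Nat.card G : k) ≠ 0 := Nat.cast_ne_zero.2 Nat.card_pos.ne'
  have : Invertible (Nat.card G : k) := invertibleOfNonzero hn
  have : Invertible (2 : k) := invertibleOfNonzero two_ne_zero
  have h := (sumZeroRep k G).symmSquare.card_inv_mul_sum_char_eq_finrank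
  simp only [Representation.char_symmSquare, ← Finset.mul_sum,
    sum_char_sumZeroRep_sq_add_char_mul_self, invOf_eq_inv] at h
  rw [← Nat.cast_inj (R := k)]
  push_cast
  rw [← h]
  field_simp
  ring

end Character

/-- For `G` the dihedral group of order 8 and `W` the 7-dimensional sum-zero
subrepresentation of its complex regular representation, the space of
`G`-invariants of `Sym² W` has dimension 6. -/
theorem finrank_invariants_sym2_eq_six : Module.finrank ℂ invariants = 6 := by
  have h := two_mul_finrank_invariants_symmSquare_sumZeroRep_add_two (k := ℂ)
    (G := DihedralGroup 4)
  have involutions : #{g : DihedralGroup 4 | g * g = 1} = 6 := by decide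
  rw [DihedralGroup.nat_card, involutions] at h
  -- `W`, `Sym2W` and `invariants` unfold to `sumZero`, `symmSquare` and its invariants.
  change Module.finrank ℂ (sumZeroRep ℂ (DihedralGroup 4)).symmSquare.invariants = 6
  omega
end

section
/- Let G be the dihedral group of order 8, W the 7-dimensional sum-zero subrepresentation of its complex left regular representation, Sym²W its symmetric square, and χ₂ : G → ℂ the character with χ₂(r^i) = (−1)^i and χ₂(s r^i) = (−1)^i. Then the complex vector space of linear maps f : Sym²W → ℂ satisfying f(g • x) = χ₂(g) · f(x) for all g ∈ G and x ∈ Sym²W has dimension 4. -/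
open scoped TensorProduct

set_option synthInstance.maxHeartbeats 1000000
set_option maxHeartbeats 1000000

/-- The space of `χ`-equivariant linear functionals on `Sym² W`. -/
noncomputable def eqMaps (χ : DihedralGroup 4 → ℂ) : Submodule ℂ (Sym2W →ₗ[ℂ] ℂ) where
  carrier := {f | ∀ (g : DihedralGroup 4) (x : Sym2W), f (symAct g x) = χ g * f x}
  add_mem' := by
    intro a b ha hb g x
    simp only [LinearMap.add_apply, ha g x, hb g x]
    ring
  zero_mem' := by
    intro g x
    simp
  smul_mem' := by
    intro c f hf g x
    simp only [LinearMap.smul_apply, hf g x, smul_eq_mul]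
    ring

/-- The character of `DihedralGroup 4` with `χ₂(r^i) = (-1)^i` and
`χ₂(s r^i) = (-1)^i`. -/
noncomputable def chi2 : DihedralGroup 4 → ℂ
  | .r i => (-1) ^ i.val
  | .sr i => (-1) ^ i.val

/-!
A `χ`-equivariant functional on `Sym² W` is a symmetric bilinear form `B` on `W` with
`B (g • v) (g • w) = χ g * B v w`. The vectors `v_x = δ_x - 1/8` span `W` subject only to
`∑ v_x = 0`, so `B` is determined by its Gram matrix `M x y = B v_x v_y`, which has zero row
sums; equivariance forces `M x y = χ x * m (x⁻¹ * y)` with `m t = M 1 t`. Conversely such a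
matrix defines a functional exactly when `m t = χ t * m t⁻¹` (symmetry of `M`) and `∑ m = 0`
(zero row sums). For `χ₂` these conditions make `m` vanish at the reflections `s r`, `s r³`
(where `χ₂ = -1`), odd on `{r, r³}`, and free at `1`, `r`, `r²`, `s`, the value at `s r²` being
fixed by the sum: a 4-dimensional space.
-/

open DihedralGroup

local notation "D₄" => DihedralGroup 4

lemma chi2_mul (g h : D₄) : chi2 (g * h) = chi2 g * chi2 h := by
  have add_parity : ∀ i j : ZMod 4, (i + j).val % 2 = (i.val + j.val) % 2 := by decide
  have sub_parity : ∀ i j : ZMod 4, (j - i).val % 2 = (i.val + j.val) % 2 := by decide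
  rcases g with i | i <;> rcases h with j | j <;>
    simp only [r_mul_r, r_mul_sr, sr_mul_r, sr_mul_sr, chi2] <;>
    rw [neg_one_pow_eq_pow_mod_two, ← pow_add, neg_one_pow_eq_pow_mod_two (_ + _)] <;>
    simp only [add_parity, sub_parity]

noncomputable def chi2Hom : D₄ →* ℂ where
  toFun := chi2
  map_one' := rfl
  map_mul' := chi2_mul

noncomputable def vW (x : D₄) : W :=
  ⟨Pi.single x 1 - fun _ => 1 / 8, by
    simp [W, Finset.sum_sub_distrib, Finset.card_univ, DihedralGroup.card]⟩

lemma vW_apply (x y : D₄) : (vW x : D₄ → ℂ) y = Pi.single (M := fun _ => ℂ) x 1 y - 1 / 8 := rfl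

lemma sum_vW : ∑ x : D₄, vW x = 0 := by
  ext y
  simp [vW_apply, Finset.sum_sub_distrib, Finset.card_univ, DihedralGroup.card, Pi.single_apply]

lemma eq_sum_smul_vW (w : W) : w = ∑ x : D₄, (w : D₄ → ℂ) x • vW x := by
  have hw : ∑ x : D₄, (w : D₄ → ℂ) x = 0 := by simpa [W] using w.2
  ext y
  simp [vW_apply, mul_sub, Finset.sum_sub_distrib, ← Finset.sum_mul, hw, Pi.single_apply]

lemma regW_vW (g x : D₄) : regW g (vW x) = vW (g * x) := by
  ext y
  simp [regW, reg, vW_apply, LinearMap.funLeft_apply, Pi.single_apply, inv_mul_eq_iff_eq_mul]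

lemma symAct_mk_tmul (g : D₄) (v w : W) :
    symAct g (Submodule.Quotient.mk (v ⊗ₜ w)) =
      Submodule.Quotient.mk (regW g v ⊗ₜ regW g w) :=
  rfl

lemma mk_tmul_comm (v w : W) :
    (Submodule.Quotient.mk (v ⊗ₜ w) : Sym2W) = Submodule.Quotient.mk (w ⊗ₜ v) :=
  (Submodule.Quotient.eq _).2 (Submodule.subset_span ⟨v, w, rfl⟩)

lemma Sym2W.linearMap_ext {M : Type*} [AddCommGroup M] [Module ℂ M] {F₁ F₂ : Sym2W →ₗ[ℂ] M}
    (h : ∀ x y : D₄, F₁ (Submodule.Quotient.mk (vW x ⊗ₜ vW y)) =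
      F₂ (Submodule.Quotient.mk (vW x ⊗ₜ vW y))) : F₁ = F₂ := by
  refine Submodule.linearMap_qext _ (TensorProduct.ext' fun v w => ?_)
  rw [eq_sum_smul_vW v, eq_sum_smul_vW w]
  simp only [TensorProduct.sum_tmul,
    TensorProduct.tmul_sum, TensorProduct.smul_tmul_smul, map_sum, map_smul,
    LinearMap.comp_apply, Submodule.mkQ_apply, h]

noncomputable def Sym2W.lift (B : LinearMap.BilinForm ℂ W) (hB : B.IsSymm) : Sym2W →ₗ[ℂ] ℂ :=
  symRel.liftQ (TensorProduct.lift B) <| (Submodule.span_le).2 <| by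
    rintro _ ⟨v, w, rfl⟩
    simp [hB.eq v w]

lemma Sym2W.lift_mk_tmul (B : LinearMap.BilinForm ℂ W) (hB : B.IsSymm) (v w : W) :
    Sym2W.lift B hB (Submodule.Quotient.mk (v ⊗ₜ w)) = B v w :=
  rfl

lemma toBilin'_vW {M : Matrix D₄ D₄ ℂ} (hrow : ∀ x, ∑ y, M x y = 0) (hcol : ∀ y, ∑ x, M x y = 0)
    (x y : D₄) : Matrix.toBilin' M (vW x) (vW y) = M x y := by
  simp only [Matrix.toBilin'_apply, vW_apply, sub_mul, mul_sub, Finset.sum_sub_distrib,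
    ← Finset.sum_mul, ← Finset.mul_sum, Pi.single_apply]
  simp [← Finset.mul_sum, hrow, hcol]

def twistedSymmSumZero (χ : D₄ → ℂ) : Submodule ℂ (D₄ → ℂ) where
  carrier := {m | (∀ t, m t = χ t * m t⁻¹) ∧ ∑ t, m t = 0}
  add_mem' {m m'} hm hm' :=
    ⟨fun t => by simp [hm.1 t, hm'.1 t, mul_add], by simp [Finset.sum_add_distrib, hm.2, hm'.2]⟩
  zero_mem' := ⟨fun t => by simp, by simp⟩
  smul_mem' c m hm :=
    ⟨fun t => by simp [hm.1 t, mul_left_comm], by simp [← Finset.mul_sum, hm.2]⟩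

noncomputable def baseTmul (t : D₄) : Sym2W := Submodule.Quotient.mk (vW 1 ⊗ₜ vW t)

lemma sum_baseTmul : ∑ t, baseTmul t = 0 := by
  simp only [baseTmul, ← Submodule.mkQ_apply, ← map_sum, ← TensorProduct.tmul_sum, sum_vW,
    TensorProduct.tmul_zero, map_zero]

section Restriction

variable {χ : D₄ → ℂ} {f : Sym2W →ₗ[ℂ] ℂ}

lemma apply_mk_vW_tmul_vW (hf : f ∈ eqMaps χ) (x y : D₄) :
    f (Submodule.Quotient.mk (vW x ⊗ₜ vW y)) = χ x * f (baseTmul (x⁻¹ * y)) := by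
  rw [← hf, baseTmul, symAct_mk_tmul, regW_vW, regW_vW, mul_one, mul_inv_cancel_left]

lemma apply_baseTmul_mem_twistedSymmSumZero (hf : f ∈ eqMaps χ) :
    (fun t => f (baseTmul t)) ∈ twistedSymmSumZero χ := by
  refine ⟨fun t => ?_, by rw [← map_sum, sum_baseTmul, map_zero]⟩
  calc f (baseTmul t) = f (Submodule.Quotient.mk (vW t ⊗ₜ vW 1)) := by rw [baseTmul, mk_tmul_comm]
    _ = χ t * f (baseTmul t⁻¹) := by rw [apply_mk_vW_tmul_vW hf, mul_one]

variable (χ) in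
noncomputable def restrictBase : eqMaps χ →ₗ[ℂ] twistedSymmSumZero χ :=
  LinearMap.codRestrict _
    (LinearMap.pi fun t => (LinearMap.applyₗ (baseTmul t)).comp (eqMaps χ).subtype)
    fun f => apply_baseTmul_mem_twistedSymmSumZero f.2

lemma restrictBase_injective : Function.Injective (restrictBase χ) := by
  refine (injective_iff_map_eq_zero _).2 fun f hf =>
    Subtype.ext <| Sym2W.linearMap_ext fun x y => ?_
  have h0 (t : D₄) : (f : Sym2W →ₗ[ℂ] ℂ) (baseTmul t) = 0 := congrFun (congrArg Subtype.val hf) t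
  simp [apply_mk_vW_tmul_vW f.2, h0]

end Restriction

noncomputable def twistMatrix (χ : D₄ →* ℂ) (m : D₄ → ℂ) : Matrix D₄ D₄ ℂ :=
  Matrix.of fun x y => χ x * m (x⁻¹ * y)

section Construction

variable {χ : D₄ →* ℂ} {m : D₄ → ℂ}

lemma twistMatrix_isSymm (hm : ∀ t, m t = χ t * m t⁻¹) : (twistMatrix χ m).IsSymm :=
  Matrix.IsSymm.ext fun x y => by
    simp only [twistMatrix, Matrix.of_apply]
    rw [hm (y⁻¹ * x), ← mul_assoc, ← map_mul, mul_inv_cancel_left, mul_inv_rev, inv_inv]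

lemma twistMatrix_mul_mul (g x y : D₄) :
    twistMatrix χ m (g * x) (g * y) = χ g * twistMatrix χ m x y := by
  simp [twistMatrix, mul_assoc]

lemma sum_twistMatrix_apply (hsum : ∑ t, m t = 0) (x : D₄) : ∑ y, twistMatrix χ m x y = 0 := by
  have translate : ∑ y, m (x⁻¹ * y) = ∑ t, m t := Equiv.sum_comp (Equiv.mulLeft x⁻¹) m
  simp only [twistMatrix, Matrix.of_apply, ← Finset.mul_sum, translate, hsum, mul_zero]

noncomputable def twistForm (hm : m ∈ twistedSymmSumZero χ) : Sym2W →ₗ[ℂ] ℂ :=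
  Sym2W.lift ((twistMatrix χ m).toBilin'.restrict W)
    ⟨fun v w => (Matrix.isSymm_toBilin'_iff_isSymm.2 (twistMatrix_isSymm hm.1)).eq v w⟩

lemma twistForm_mk_vW_tmul_vW (hm : m ∈ twistedSymmSumZero χ) (x y : D₄) :
    twistForm hm (Submodule.Quotient.mk (vW x ⊗ₜ vW y)) = twistMatrix χ m x y :=
  (Sym2W.lift_mk_tmul _ _ _ _).trans <| toBilin'_vW (sum_twistMatrix_apply hm.2) (fun y => by
    simpa [(twistMatrix_isSymm hm.1).apply] using sum_twistMatrix_apply hm.2 y) x y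

lemma twistForm_mem_eqMaps (hm : m ∈ twistedSymmSumZero χ) : twistForm hm ∈ eqMaps χ := by
  intro g z
  have : (twistForm hm).comp (symAct g) = χ g • twistForm hm :=
    Sym2W.linearMap_ext fun x y => by
      simp [symAct_mk_tmul, regW_vW, twistForm_mk_vW_tmul_vW, twistMatrix_mul_mul]
  exact LinearMap.congr_fun this z

lemma restrictBase_surjective : Function.Surjective (restrictBase χ) := fun m =>
  ⟨⟨twistForm m.2, twistForm_mem_eqMaps m.2⟩, Subtype.ext <| funext fun t => by
    simp [restrictBase, baseTmul, twistForm_mk_vW_tmul_vW, twistMatrix]⟩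

end Construction

noncomputable def eqMapsEquiv (χ : D₄ →* ℂ) : eqMaps χ ≃ₗ[ℂ] twistedSymmSumZero χ :=
  LinearEquiv.ofBijective (restrictBase χ) ⟨restrictBase_injective, restrictBase_surjective⟩

lemma DihedralGroup.sum_eq_sum_r_add_sum_sr {n : ℕ} [NeZero n] {M : Type*} [AddCommMonoid M]
    (F : DihedralGroup n → M) : ∑ x, F x = ∑ i, F (r i) + ∑ i, F (sr i) :=
  (Equiv.sum_comp equivSum.symm F).symm.trans (Fintype.sum_sum_type _)

lemma ZMod.sum_four {M : Type*} [AddCommMonoid M] (f : ZMod 4 → M) :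
    ∑ i, f i = f 0 + f 1 + f 2 + f 3 :=
  Fin.sum_univ_four f

lemma ZMod.four_cases (i : ZMod 4) : i = 0 ∨ i = 1 ∨ i = 2 ∨ i = 3 := by decide +revert

noncomputable def ofCoords (c : Fin 4 → ℂ) : D₄ → ℂ
  | .r i => if i = 0 then c 0 else if i = 1 then c 1 else if i = 2 then c 2 else -c 1
  | .sr i => if i = 0 then c 3 else if i = 2 then -(c 0 + c 2 + c 3) else 0

lemma ofCoords_mem (c : Fin 4 → ℂ) : ofCoords c ∈ twistedSymmSumZero chi2 := by
  refine ⟨fun t => ?_, ?_⟩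
  · rcases t with i | i <;> rcases ZMod.four_cases i with rfl | rfl | rfl | rfl <;>
      simp +decide [ofCoords, chi2, inv_r, inv_sr, -r_zero]
  · simp +decide [DihedralGroup.sum_eq_sum_r_add_sum_sr, ZMod.sum_four, ofCoords]
    ring

def coordPoints : Fin 4 → D₄ := ![r 0, r 1, r 2, sr 0]

noncomputable def coords : twistedSymmSumZero chi2 →ₗ[ℂ] (Fin 4 → ℂ) :=
  LinearMap.pi fun j => (LinearMap.proj (coordPoints j)).comp (twistedSymmSumZero chi2).subtype

lemma coords_ofCoords (c : Fin 4 → ℂ) : coords ⟨ofCoords c, ofCoords_mem c⟩ = c := by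
  ext j
  fin_cases j <;> simp +decide [coords, coordPoints, ofCoords, -r_zero]

lemma ofCoords_coords (m : twistedSymmSumZero chi2) : ofCoords (coords m) = m := by
  obtain ⟨m, hm, hsum⟩ := m
  have hr3 : m (r 3) = -m (r 1) := by
    simpa +decide [chi2, inv_r, show (-3 : ZMod 4) = 1 from rfl] using hm (r 3)
  have hsr1 : m (sr 1) = 0 := by
    simpa +decide [chi2, inv_sr, eq_neg_iff_add_eq_zero] using hm (sr 1)
  have hsr3 : m (sr 3) = 0 := by
    simpa +decide [chi2, inv_sr, eq_neg_iff_add_eq_zero] using hm (sr 3)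
  rw [DihedralGroup.sum_eq_sum_r_add_sum_sr, ZMod.sum_four, ZMod.sum_four, hr3, hsr1, hsr3] at hsum
  have hsr2 : m (sr 2) = -(m (r 0) + m (r 2) + m (sr 0)) := by linear_combination hsum
  funext t
  rcases t with i | i <;> rcases ZMod.four_cases i with rfl | rfl | rfl | rfl <;>
    simp +decide [ofCoords, coords, coordPoints, hr3, hsr1, hsr2, hsr3, -r_zero]

lemma finrank_twistedSymmSumZero_chi2 : Module.finrank ℂ (twistedSymmSumZero chi2) = 4 := by
  have bij : Function.Bijective coords :=
    ⟨fun m₁ m₂ h => Subtype.ext <| by rw [← ofCoords_coords m₁, ← ofCoords_coords m₂, h],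
      fun c => ⟨_, coords_ofCoords c⟩⟩
  rw [(LinearEquiv.ofBijective coords bij).finrank_eq, Module.finrank_fin_fun]

/-- The multiplicity of the character `χ₂` in `Sym² W` is 4. -/
theorem finrank_eqMaps_chi2_eq_four : Module.finrank ℂ (eqMaps chi2) = 4 :=
  (eqMapsEquiv chi2Hom).finrank_eq.trans finrank_twistedSymmSumZero_chi2
end
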